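/- Let a, b ∈ H² with Re(a) ≠ Re(b), and let w = (|a|² − |b|²)/(2·Re(a−b)). Then the real numbers a⋆ and b⋆ satisfy |a⋆ − w| = |b⋆ − w| = |a − w| = |b − w|; that is, a⋆ and b⋆ lie on the circle centered at the real point w that passes through a and b. -/

import Mathlib

/-! The key identity is `(a - b) * (a - conj b) = 2 Re(a - b) · a - (|a|² - |b|²)`, i.e.
`a - w = (a - b) * (a - conj b) / (2 Re(a - b))`. Hence `|a - w| = |a - b| |a - conj b| / |2 Re(a - b)|`,
which is `|a⋆ - w| = |b⋆ - w|` because `a⋆ - w = w - b⋆ = |a - b| |a - conj b| / (2 Re(a - b))`.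
That value is symmetric in `a` and `b`, so it is also `|b - w|`. -/

open Complex ComplexConjugate

namespace Complex

lemma sub_mul_sub_conj (a b : ℂ) :
    (a - b) * (a - conj b) = 2 * (a - b).re * a - ((‖a‖ ^ 2 - ‖b‖ ^ 2 : ℝ) : ℂ) := by
  apply Complex.ext <;> simp [Complex.sq_norm, Complex.normSq_apply] <;> ring

lemma norm_sub_conj_comm (a b : ℂ) : ‖b - conj a‖ = ‖a - conj b‖ := by
  rw [← norm_conj, map_sub, conj_conj, norm_sub_rev]

end Complex

/-- The real centre of the circle through `a` and `b` that is orthogonal to the real axis. -/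
noncomputable def geodesicCenter (a b : ℂ) : ℝ := (‖a‖ ^ 2 - ‖b‖ ^ 2) / (2 * (a - b).re)

lemma geodesicCenter_comm (a b : ℂ) : geodesicCenter b a = geodesicCenter a b := by
  rw [geodesicCenter, geodesicCenter, ← neg_sub a b, neg_re, ← neg_sub (‖a‖ ^ 2), mul_neg,
    neg_div_neg_eq]

lemma sub_geodesicCenter {a b : ℂ} (h : (a - b).re ≠ 0) :
    a - geodesicCenter a b = (a - b) * (a - conj b) / (2 * (a - b).re) := by
  have h' : ((a - b).re : ℂ) ≠ 0 := ofReal_ne_zero.mpr h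
  rw [sub_mul_sub_conj, geodesicCenter]
  push_cast
  field_simp

lemma norm_sub_geodesicCenter {a b : ℂ} (h : (a - b).re ≠ 0) :
    ‖a - geodesicCenter a b‖ = ‖a - b‖ * ‖a - conj b‖ / |2 * (a - b).re| := by
  rw [sub_geodesicCenter h, norm_div, norm_mul, ← ofReal_ofNat, ← ofReal_mul, norm_real,
    Real.norm_eq_abs]

lemma norm_sub_geodesicCenter_comm {a b : ℂ} (h : (a - b).re ≠ 0) :
    ‖b - geodesicCenter a b‖ = ‖a - geodesicCenter a b‖ := by
  have h' : (b - a).re ≠ 0 := by rwa [← neg_sub, neg_re, neg_ne_zero]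
  rw [← geodesicCenter_comm a b, norm_sub_geodesicCenter h', geodesicCenter_comm,
    norm_sub_geodesicCenter h,
    norm_sub_rev b a, norm_sub_conj_comm, ← abs_neg, ← mul_neg, ← neg_re, neg_sub]

theorem endpoints_on_circle (a b : ℂ)
    (hre : a.re ≠ b.re)
    (w astar bstar : ℝ)
    (hw : w = (‖a‖ ^ 2 - ‖b‖ ^ 2) / (2 * (a - b).re))
    (hastar : astar = (‖a‖ ^ 2 - ‖b‖ ^ 2 +
        ‖a - b‖ * ‖a - conj b‖) / (2 * (a - b).re))
    (hbstar : bstar = (‖a‖ ^ 2 - ‖b‖ ^ 2 -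
        ‖a - b‖ * ‖a - conj b‖) / (2 * (a - b).re)) :
    ‖(astar : ℂ) - (w : ℂ)‖ = ‖(bstar : ℂ) - (w : ℂ)‖ ∧
    ‖(bstar : ℂ) - (w : ℂ)‖ = ‖a - (w : ℂ)‖ ∧
    ‖a - (w : ℂ)‖ = ‖b - (w : ℂ)‖ := by
  have hd : (a - b).re ≠ 0 := by rwa [sub_re, sub_ne_zero]
  set r := ‖a - b‖ * ‖a - conj b‖ / (2 * (a - b).re)
  have hastar_sub : astar - w = r := by rw [hastar, hw]; ring
  have hbstar_sub : bstar - w = -r := by rw [hbstar, hw]; ring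
  have hr : |r| = ‖a - w‖ := by
    rw [hw, ← geodesicCenter, norm_sub_geodesicCenter hd, abs_div,
      abs_of_nonneg (by positivity)]
  simp only [← ofReal_sub, norm_real, Real.norm_eq_abs, hastar_sub, hbstar_sub, abs_neg, hr,
    true_and]
  rw [hw, ← geodesicCenter, norm_sub_geodesicCenter_comm hd]
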